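/- arXiv:2211.04659 — 2 statements merged into one kernel-verified Lean document; each statement's English description precedes it below -/
import Mathlib

section
/- Define the sequence of polynomials P̃_0(λ) = 1, P̃_1(λ) = 1 − hλ(1 − γλ)/(1+m), and P̃_{t+1}(λ) = (1 + m − hλ(1 − γλ)) P̃_t(λ) − m P̃_{t−1}(λ). Then for every t, P̃_t(λ) = m^{t/2} ( (2m/(1+m)) T_t(σ(λ)) + ((1−m)/(1+m)) U_t(σ(λ)) ), where σ(λ) = (1 + m − hλ(1 − γλ)) / (2√m). -/
/-!
With `s = √m` and `x = σ(λ)` the recurrence reads `P̃_{t+2} = 2 s x P̃_{t+1} - s² P̃_t`. Since `T_t`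
and `U_t` both satisfy `p_{t+2} = 2 x p_{t+1} - p_t`, every sequence `s^t (α T_t(x) + β U_t(x))`
solves this recurrence, and the coefficients `α = 2m/(1+m)`, `β = (1-m)/(1+m)` are the ones
matching `P̃_0` and `P̃_1`.
-/

open Polynomial

theorem eq_of_twoStep_recurrence {R : Type*} [CommRing R] {a b : ℕ → R} (p q : R)
    (ha : ∀ n, a (n + 2) = p * a (n + 1) - q * a n)
    (hb : ∀ n, b (n + 2) = p * b (n + 1) - q * b n)
    (h0 : a 0 = b 0) (h1 : a 1 = b 1) : a = b := by
  funext n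
  induction n using Nat.twoStepInduction with
  | zero => exact h0
  | one => exact h1
  | more n ihn ihn1 => rw [ha, hb, ihn, ihn1]

namespace Polynomial.Chebyshev

variable {R : Type*} [CommRing R]

noncomputable def scaledComb (α β s x : R) (n : ℕ) : R :=
  s ^ n * (α * (T R n).eval x + β * (U R n).eval x)

theorem scaledComb_add_two (α β s x : R) (n : ℕ) :
    scaledComb α β s x (n + 2) =
      2 * s * x * scaledComb α β s x (n + 1) - s ^ 2 * scaledComb α β s x n := by
  simp only [scaledComb, Nat.cast_add, Nat.cast_ofNat, Nat.cast_one, T_add_two, U_add_two,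
    eval_sub, eval_mul, eval_X, eval_ofNat]
  ring

end Polynomial.Chebyshev

open Polynomial.Chebyshev in
theorem egm_residual_polynomial_chebyshev (h γ m : ℝ) (hm : 0 < m)
    (P : ℕ → ℝ → ℝ)
    (hP0 : ∀ lam, P 0 lam = 1)
    (hP1 : ∀ lam, P 1 lam = 1 - h * lam * (1 - γ * lam) / (1 + m))
    (hPrec : ∀ t lam, P (t + 2) lam =
      (1 + m - h * lam * (1 - γ * lam)) * P (t + 1) lam - m * P t lam) :
    ∀ t lam, P t lam =
      m ^ ((t : ℝ) / 2) *
        ((2 * m / (1 + m)) *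
            (Polynomial.Chebyshev.T ℝ t).eval ((1 + m - h * lam * (1 - γ * lam)) / (2 * Real.sqrt m)) +
          ((1 - m) / (1 + m)) *
            (Polynomial.Chebyshev.U ℝ t).eval ((1 + m - h * lam * (1 - γ * lam)) / (2 * Real.sqrt m))) := by
  intro t lam
  have hpow : m ^ ((t : ℝ) / 2) = Real.sqrt m ^ t := by
    rw [Real.sqrt_eq_rpow, ← Real.rpow_natCast, ← Real.rpow_mul hm.le, one_div_mul_eq_div]
  set c := 1 + m - h * lam * (1 - γ * lam)
  set s := Real.sqrt m
  have hs : s ^ 2 = m := Real.sq_sqrt hm.le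
  have hs0 : s ≠ 0 := Real.sqrt_ne_zero'.mpr hm
  have hcs : 2 * s * (c / (2 * s)) = c := by field_simp
  have hP : (P · lam) = scaledComb (2 * m / (1 + m)) ((1 - m) / (1 + m)) s (c / (2 * s)) := by
    refine eq_of_twoStep_recurrence c m (hPrec · lam) (fun n => ?_) ?_ ?_
    · rw [scaledComb_add_two, hcs, hs]
    · simp only [hP0, scaledComb, pow_zero, Nat.cast_zero, T_zero, U_zero, eval_one]
      field_simp
      ring
    · simp only [hP1, scaledComb, pow_one, Nat.cast_one, T_one, U_one, eval_X, eval_mul,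
        eval_ofNat]
      field_simp
      ring
  rw [hpow]
  exact congrFun hP t
end

section
/- Let 0 < μ ≤ L, c > 0, and set γ = 1/(μ+L), h = 16(μ+L)/(√(4c² + (μ+L)²) + √(4μL))², and √m = (√(4c² + (μ+L)²) − √(4μL))/(√(4c² + (μ+L)²) + √(4μL)). Then these values satisfy: 1/(2γ) − √(1/(4γ²) − (1−√m)²/(hγ)) = μ, 1/(2γ) + √(1/(4γ²) − (1−√m)²/(hγ)) = L, and √((1+√m)²/(hγ) − 1/(4γ²)) = c. -/
/-! With `S = √(4c² + (μ+L)²)` and `T = √(4μL)` one has `hγ = 16 / (S+T)²`,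
`1 - √m = 2T / (S+T)` and `1 + √m = 2S / (S+T)`, so `(1-√m)²/(hγ) = T²/4 = μL` and
`(1+√m)²/(hγ) = S²/4 = c² + ((μ+L)/2)²`. Since `1/(2γ) = (μ+L)/2`, the two radicands are
`((μ+L)/2)² - μL = ((L-μ)/2)²` and `c²`. -/

lemma one_sub_div_add_sq_div (S T : ℝ) (hST : S + T ≠ 0) :
    (1 - (S - T) / (S + T)) ^ 2 / (16 / (S + T) ^ 2) = T ^ 2 / 4 := by
  field_simp
  ring

lemma one_add_div_add_sq_div (S T : ℝ) (hST : S + T ≠ 0) :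
    (1 + (S - T) / (S + T)) ^ 2 / (16 / (S + T) ^ 2) = S ^ 2 / 4 := by
  field_simp
  ring

theorem egm_optimal_hyperparameters (μ L c : ℝ) (hμ : 0 < μ) (hμL : μ ≤ L) (hc : 0 < c)
    (γ h sm : ℝ)
    (hγ : γ = 1 / (μ + L))
    (hh : h = 16 * (μ + L) / (Real.sqrt (4 * c ^ 2 + (μ + L) ^ 2) + Real.sqrt (4 * μ * L)) ^ 2)
    (hsm : sm = (Real.sqrt (4 * c ^ 2 + (μ + L) ^ 2) - Real.sqrt (4 * μ * L)) /
        (Real.sqrt (4 * c ^ 2 + (μ + L) ^ 2) + Real.sqrt (4 * μ * L))) :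
    1 / (2 * γ) - Real.sqrt (1 / (4 * γ ^ 2) - (1 - sm) ^ 2 / (h * γ)) = μ ∧
    1 / (2 * γ) + Real.sqrt (1 / (4 * γ ^ 2) - (1 - sm) ^ 2 / (h * γ)) = L ∧
    Real.sqrt ((1 + sm) ^ 2 / (h * γ) - 1 / (4 * γ ^ 2)) = c ∧
    0 ≤ 1 / (4 * γ ^ 2) - (1 - sm) ^ 2 / (h * γ) ∧
    0 ≤ (1 + sm) ^ 2 / (h * γ) - 1 / (4 * γ ^ 2) := by
  set S := Real.sqrt (4 * c ^ 2 + (μ + L) ^ 2)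
  set T := Real.sqrt (4 * μ * L)
  have hL : 0 < L := hμ.trans_le hμL
  have hST : S + T ≠ 0 := by positivity
  have half_inv : 1 / (2 * γ) = (μ + L) / 2 := by rw [hγ]; field_simp
  have quarter_inv_sq : 1 / (4 * γ ^ 2) = ((μ + L) / 2) ^ 2 := by rw [hγ]; field_simp; ring
  have hγ_mul : h * γ = 16 / (S + T) ^ 2 := by rw [hh, hγ]; field_simp
  have radicand_real : 1 / (4 * γ ^ 2) - (1 - sm) ^ 2 / (h * γ) = ((L - μ) / 2) ^ 2 := by
    rw [quarter_inv_sq, hsm, hγ_mul, one_sub_div_add_sq_div S T hST,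
      Real.sq_sqrt (by positivity)]
    ring
  have radicand_imag : (1 + sm) ^ 2 / (h * γ) - 1 / (4 * γ ^ 2) = c ^ 2 := by
    rw [quarter_inv_sq, hsm, hγ_mul, one_add_div_add_sq_div S T hST,
      Real.sq_sqrt (by positivity)]
    ring
  rw [radicand_real, radicand_imag, half_inv, Real.sqrt_sq (by linarith), Real.sqrt_sq hc.le]
  exact ⟨by ring, by ring, rfl, by positivity, by positivity⟩
end
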